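/- For real x ≠ 0 let v(x) = exp(−½ Log((x−i)/(x+i))) − 1 and for all real x let w(x) = exp(½ Log((1+ix)/(1−ix))) − 1, where Log is the principal complex logarithm (so v(±∞) = 0 and w(0) = 0). For ε ∈ (0,1] set F_ε(x) = v(x/ε)·w(εx). Let I₀ = [−1−√2, 1+√2]. Then, as ε → 0: sup_{x ∈ I₀, x ≠ 0} |F_ε'(x)| → 0 and ∫_{I₀} |F_ε''(x)| dx → 0 (the derivatives taken on I₀ \ {0}). -/

import Mathlib

/-!
The functions `vf + 1` and `wf + 1` are `exp (∓ ½ Log g)` for arguments `g` of modulus one, so they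
are unimodular, and their logarithmic derivatives are `∓ i / (1 + y²)`. This gives `|v| ≤ 2`,
`|v'| ≤ 1 / (1 + y²)`, `|v''| ≤ 2 / (1 + y²)` and `|w'| ≤ 1`, `|w''| ≤ 2`; moreover `wf x + 1` is the
principal square root of `(1 + ix) / (1 - ix)`, hence has nonnegative real part, and
`|w| ≤ |(w + 1)² - 1| ≤ 2|x|`. With `y = x / ε` the chain rule then gives
`|F_ε'(x)| ≤ 2ε|y| / (1 + y²) + 2ε ≤ 3ε` and
`|F_ε''(x)| ≤ (4|y| + 2) / (1 + y²) + 4ε² ≤ 6 √ε |x|^(-1/2) + 4ε²`,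
and the last majorant has integral `O(√ε)` over `I₀`.
-/

open Filter

noncomputable section

/-- `v(x) = exp(−½ Log((x−i)/(x+i))) − 1` (for `x ≠ 0`; principal logarithm). -/
def vf (x : ℝ) : ℂ :=
  Complex.exp (-(1/2 : ℂ) * Complex.log (((x : ℂ) - Complex.I) / ((x : ℂ) + Complex.I))) - 1

/-- `w(x) = exp(½ Log((1+ix)/(1−ix))) − 1` (principal logarithm). -/
def wf (x : ℝ) : ℂ :=
  Complex.exp ((1/2 : ℂ) * Complex.log ((1 + Complex.I * x) / (1 - Complex.I * x))) - 1

/-- `F_ε(x) = v(x/ε) · w(εx)`. -/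
def Ff (ε : ℝ) (x : ℝ) : ℂ := vf (x / ε) * wf (ε * x)

open Complex ComplexConjugate

lemma exp_half_mul_log_sq {z : ℂ} (hz : z ≠ 0) : exp (1 / 2 * log z) ^ 2 = z := by
  rw [← exp_nat_mul, ← mul_assoc]
  norm_num [exp_log hz]

lemma re_exp_half_mul_log_nonneg (z : ℂ) : 0 ≤ (exp (1 / 2 * log z)).re := by
  rw [exp_re]
  refine mul_nonneg (Real.exp_pos _).le (Real.cos_nonneg_of_mem_Icc ?_)
  have h₁ := neg_pi_lt_arg z
  have h₂ := arg_le_pi z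
  norm_num [log_im]
  constructor <;> linarith

lemma norm_sub_one_le_norm_sq_sub_one {z : ℂ} (hz : 0 ≤ z.re) : ‖z - 1‖ ≤ ‖z ^ 2 - 1‖ := by
  have h : 1 ≤ ‖z + 1‖ := by linarith [re_le_norm (z + 1), add_re z 1, one_re]
  rw [show z ^ 2 - 1 = (z - 1) * (z + 1) by ring, norm_mul]
  exact le_mul_of_one_le_right (norm_nonneg _) h

lemma one_add_ofReal_sq_ne_zero (t : ℝ) : 1 + (t : ℂ) ^ 2 ≠ 0 := by
  exact_mod_cast (by positivity : (0 : ℝ) < 1 + t ^ 2).ne'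

lemma norm_one_add_ofReal_sq (t : ℝ) : ‖1 + (t : ℂ) ^ 2‖ = 1 + t ^ 2 := by
  rw [show 1 + (t : ℂ) ^ 2 = ((1 + t ^ 2 : ℝ) : ℂ) by push_cast; ring]
  exact Complex.norm_of_nonneg (by positivity)

lemma norm_div_one_add_ofReal_sq {c : ℂ} (hc : ‖c‖ = 1) (t : ℝ) :
    ‖c / (1 + t ^ 2)‖ = 1 / (1 + t ^ 2) := by
  rw [norm_div, hc, norm_one_add_ofReal_sq]

lemma norm_mul_sub_div_one_add_ofReal_sq_sq_le {c : ℂ} (hc : ‖c‖ = 1) (t : ℝ) :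
    ‖c * (c - 2 * t) / (1 + t ^ 2) ^ 2‖ ≤ 2 / (1 + t ^ 2) := by
  have hsub : ‖c - 2 * t‖ ≤ 2 * (1 + t ^ 2) := by
    calc ‖c - 2 * t‖ ≤ ‖c‖ + ‖(2 * t : ℂ)‖ := norm_sub_le _ _
      _ = 1 + 2 * |t| := by simp [hc]
      _ ≤ 2 * (1 + t ^ 2) := by nlinarith [sq_abs t, sq_nonneg (|t| - 1)]
  rw [norm_div, norm_mul, hc, one_mul, norm_pow, norm_one_add_ofReal_sq,
    div_le_div_iff₀ (by positivity) (by positivity)]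
  nlinarith [sq_nonneg t]

lemma HasDerivAt.div_one_add_sq_mul {f : ℝ → ℂ} {c : ℂ} {t : ℝ}
    (hf : HasDerivAt f (c / (1 + t ^ 2) * f t) t) :
    HasDerivAt (fun s : ℝ => c / (1 + s ^ 2) * f s)
      (c * (c - 2 * t) / (1 + t ^ 2) ^ 2 * f t) t := by
  have hq : HasDerivAt (fun s : ℝ => 1 + (s : ℂ) ^ 2) (2 * (t : ℂ)) t :=
    (((hasDerivAt_id t).ofReal_comp.pow 2).const_add 1).congr_deriv (by simp)
  have h₀ := one_add_ofReal_sq_ne_zero t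
  refine (((hasDerivAt_const t c).div hq h₀).mul hf).congr_deriv ?_
  simp only [Pi.div_apply]
  field_simp
  ring

lemma ofReal_add_I_ne_zero (y : ℝ) : (y : ℂ) + I ≠ 0 := by
  simp [Complex.ext_iff]

lemma one_sub_I_mul_ne_zero (y : ℝ) : 1 - I * y ≠ 0 := by
  simp [Complex.ext_iff]

lemma norm_sub_I_div_add_I (y : ℝ) : ‖((y : ℂ) - I) / (y + I)‖ = 1 := by
  rw [norm_div, show (y : ℂ) - I = conj ((y : ℂ) + I) by simp [Complex.ext_iff], norm_conj,
    div_self (norm_ne_zero_iff.2 (ofReal_add_I_ne_zero y))]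

lemma norm_one_add_I_mul_div (y : ℝ) : ‖(1 + I * y) / (1 - I * y)‖ = 1 := by
  rw [norm_div, show 1 + I * y = conj (1 - I * y) by simp, norm_conj,
    div_self (norm_ne_zero_iff.2 (one_sub_I_mul_ne_zero y))]

lemma sub_I_div_add_I_mem_slitPlane {y : ℝ} (hy : y ≠ 0) :
    ((y : ℂ) - I) / (y + I) ∈ slitPlane := by
  refine mem_slitPlane_iff.2 (Or.inr ?_)
  simp [div_im, normSq_apply]
  field_simp
  norm_num [hy]

lemma one_add_I_mul_div_mem_slitPlane (y : ℝ) : (1 + I * y) / (1 - I * y) ∈ slitPlane := by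
  rcases eq_or_ne y 0 with rfl | hy
  · simp
  refine mem_slitPlane_iff.2 (Or.inr ?_)
  simp [div_im, normSq_apply]
  field_simp
  norm_num [hy]

lemma hasDerivAt_log_sub_I_div_add_I {y : ℝ} (hy : y ≠ 0) :
    HasDerivAt (fun t : ℝ => log ((t - I) / (t + I))) (2 * I / (1 + y ^ 2)) y := by
  have hnum : HasDerivAt (fun t : ℝ => (t : ℂ) - I) 1 y :=
    (hasDerivAt_id y).ofReal_comp.sub_const I
  have hden : HasDerivAt (fun t : ℝ => (t : ℂ) + I) 1 y :=
    (hasDerivAt_id y).ofReal_comp.add_const I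
  refine ((hnum.div hden (ofReal_add_I_ne_zero y)).clog_real
    (sub_I_div_add_I_mem_slitPlane hy)).congr_deriv ?_
  have h₁ := ofReal_add_I_ne_zero y
  have h₂ : (y : ℂ) - I ≠ 0 := by simp [Complex.ext_iff]
  have h₃ := one_add_ofReal_sq_ne_zero y
  simp only [Pi.div_apply]
  field_simp
  linear_combination (2 * I) * I_sq

lemma hasDerivAt_log_one_add_I_mul_div (y : ℝ) :
    HasDerivAt (fun t : ℝ => log ((1 + I * t) / (1 - I * t))) (2 * I / (1 + y ^ 2)) y := by
  have hnum : HasDerivAt (fun t : ℝ => 1 + I * t) I y := by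
    simpa using ((hasDerivAt_id y).ofReal_comp.const_mul I).const_add 1
  have hden : HasDerivAt (fun t : ℝ => 1 - I * t) (-I) y := by
    simpa using ((hasDerivAt_id y).ofReal_comp.const_mul I).const_sub 1
  refine ((hnum.div hden (one_sub_I_mul_ne_zero y)).clog_real
    (one_add_I_mul_div_mem_slitPlane y)).congr_deriv ?_
  have h₁ := one_sub_I_mul_ne_zero y
  have h₂ : 1 + I * y ≠ 0 := by simp [Complex.ext_iff]
  have h₃ := one_add_ofReal_sq_ne_zero y
  simp only [Pi.div_apply]
  field_simp
  linear_combination (2 * y ^ 2) * I_sq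

def vPhase (y : ℝ) : ℂ := exp (-(1 / 2) * log ((y - I) / (y + I)))

def wPhase (x : ℝ) : ℂ := exp (1 / 2 * log ((1 + I * x) / (1 - I * x)))

def vf' (y : ℝ) : ℂ := -I / (1 + y ^ 2) * vPhase y

def vf'' (y : ℝ) : ℂ := -I * (-I - 2 * y) / (1 + y ^ 2) ^ 2 * vPhase y

def wf' (x : ℝ) : ℂ := I / (1 + x ^ 2) * wPhase x

def wf'' (x : ℝ) : ℂ := I * (I - 2 * x) / (1 + x ^ 2) ^ 2 * wPhase x

lemma norm_vPhase (y : ℝ) : ‖vPhase y‖ = 1 := by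
  rw [vPhase, norm_exp, mul_re, log_re, norm_sub_I_div_add_I]
  simp

lemma norm_wPhase (x : ℝ) : ‖wPhase x‖ = 1 := by
  rw [wPhase, norm_exp, mul_re, log_re, norm_one_add_I_mul_div]
  simp

lemma hasDerivAt_vPhase {y : ℝ} (hy : y ≠ 0) : HasDerivAt vPhase (vf' y) y :=
  ((hasDerivAt_log_sub_I_div_add_I hy).const_mul (-(1 / 2))).cexp.congr_deriv <| by
    unfold vf' vPhase; ring

lemma hasDerivAt_wPhase (x : ℝ) : HasDerivAt wPhase (wf' x) x :=
  ((hasDerivAt_log_one_add_I_mul_div x).const_mul (1 / 2)).cexp.congr_deriv <| by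
    unfold wf' wPhase; ring

lemma hasDerivAt_vf {y : ℝ} (hy : y ≠ 0) : HasDerivAt vf (vf' y) y :=
  (hasDerivAt_vPhase hy).sub_const 1

lemma hasDerivAt_wf (x : ℝ) : HasDerivAt wf (wf' x) x :=
  (hasDerivAt_wPhase x).sub_const 1

lemma hasDerivAt_vf' {y : ℝ} (hy : y ≠ 0) : HasDerivAt vf' (vf'' y) y :=
  (hasDerivAt_vPhase hy).div_one_add_sq_mul

lemma hasDerivAt_wf' (x : ℝ) : HasDerivAt wf' (wf'' x) x :=
  (hasDerivAt_wPhase x).div_one_add_sq_mul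

lemma norm_vf_le (y : ℝ) : ‖vf y‖ ≤ 2 := by
  calc ‖vPhase y - 1‖ ≤ ‖vPhase y‖ + ‖(1 : ℂ)‖ := norm_sub_le _ _
    _ = 2 := by rw [norm_vPhase, norm_one]; norm_num

lemma norm_wf_le (x : ℝ) : ‖wf x‖ ≤ 2 * |x| := by
  have hden := one_sub_I_mul_ne_zero x
  have hnum : 1 + I * x ≠ 0 := by simp [Complex.ext_iff]
  calc ‖wPhase x - 1‖ ≤ ‖wPhase x ^ 2 - 1‖ :=
        norm_sub_one_le_norm_sq_sub_one (re_exp_half_mul_log_nonneg _)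
    _ = ‖2 * I * x‖ / ‖1 - I * x‖ := by
      rw [wPhase, exp_half_mul_log_sq (div_ne_zero hnum hden), div_sub_one hden, norm_div]
      ring_nf
    _ ≤ 2 * |x| := by
      refine div_le_self (norm_nonneg _) ?_ |>.trans_eq (by simp)
      simpa using re_le_norm (1 - I * x)

lemma norm_vf'_le (y : ℝ) : ‖vf' y‖ ≤ 1 / (1 + y ^ 2) := by
  rw [vf', norm_mul, norm_vPhase, mul_one, norm_div_one_add_ofReal_sq (by simp)]

lemma norm_vf''_le (y : ℝ) : ‖vf'' y‖ ≤ 2 / (1 + y ^ 2) := by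
  rw [vf'', norm_mul, norm_vPhase, mul_one]
  exact norm_mul_sub_div_one_add_ofReal_sq_sq_le (by simp) y

lemma norm_wf'_le (x : ℝ) : ‖wf' x‖ ≤ 1 := by
  rw [wf', norm_mul, norm_wPhase, mul_one, norm_div_one_add_ofReal_sq (by simp)]
  exact div_le_one_of_le₀ (by nlinarith [sq_nonneg x]) (by positivity)

lemma norm_wf''_le (x : ℝ) : ‖wf'' x‖ ≤ 2 := by
  rw [wf'', norm_mul, norm_wPhase, mul_one]
  refine (norm_mul_sub_div_one_add_ofReal_sq_sq_le (by simp) x).trans ?_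
  exact div_le_self (by norm_num) (by nlinarith [sq_nonneg x])

lemma HasDerivAt.comp_div_mul_comp_mul {f g : ℝ → ℂ} {a b : ℂ} {ε x : ℝ}
    (hf : HasDerivAt f a (x / ε)) (hg : HasDerivAt g b (ε * x)) :
    HasDerivAt (fun t => f (t / ε) * g (ε * t))
      (ε⁻¹ • (a * g (ε * x)) + ε • (f (x / ε) * b)) x := by
  have hf' := hf.scomp x ((hasDerivAt_id x).div_const ε)
  have hg' := hg.scomp x ((hasDerivAt_id x).const_mul ε)
  refine (hf'.mul hg').congr_deriv ?_
  simp only [Function.comp_apply, id, one_div, mul_one, smul_mul_assoc, mul_smul_comm]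

def Ff' (ε x : ℝ) : ℂ := ε⁻¹ • (vf' (x / ε) * wf (ε * x)) + ε • (vf (x / ε) * wf' (ε * x))

def Ff'' (ε x : ℝ) : ℂ :=
  ε⁻¹ • (ε⁻¹ • (vf'' (x / ε) * wf (ε * x)) + ε • (vf' (x / ε) * wf' (ε * x))) +
    ε • (ε⁻¹ • (vf' (x / ε) * wf' (ε * x)) + ε • (vf (x / ε) * wf'' (ε * x)))

section Rescaled

variable {ε x : ℝ}

lemma hasDerivAt_Ff (hε : ε ≠ 0) (hx : x ≠ 0) : HasDerivAt (Ff ε) (Ff' ε x) x :=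
  (hasDerivAt_vf (div_ne_zero hx hε)).comp_div_mul_comp_mul (hasDerivAt_wf _)

lemma hasDerivAt_Ff' (hε : ε ≠ 0) (hx : x ≠ 0) : HasDerivAt (Ff' ε) (Ff'' ε x) x :=
  (((hasDerivAt_vf' (div_ne_zero hx hε)).comp_div_mul_comp_mul (hasDerivAt_wf _)).const_smul ε⁻¹).add
    (((hasDerivAt_vf (div_ne_zero hx hε)).comp_div_mul_comp_mul (hasDerivAt_wf' _)).const_smul ε)

lemma deriv_deriv_Ff (hε : ε ≠ 0) (hx : x ≠ 0) : deriv (deriv (Ff ε)) x = Ff'' ε x := by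
  have h : deriv (Ff ε) =ᶠ[nhds x] Ff' ε := by
    filter_upwards [eventually_ne_nhds hx] with t ht using (hasDerivAt_Ff hε ht).deriv
  rw [h.deriv_eq, (hasDerivAt_Ff' hε hx).deriv]

lemma norm_Ff'_le (hε : 0 < ε) (x : ℝ) : ‖Ff' ε x‖ ≤ 3 * ε := by
  set y := x / ε with hy
  have hεx : |ε * x| = ε ^ 2 * |y| := by
    rw [hy, abs_mul, abs_div, abs_of_pos hε]; field_simp
  have hy2 : 2 * |y| ≤ 1 + y ^ 2 := by nlinarith [sq_abs y, sq_nonneg (|y| - 1)]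
  calc ‖Ff' ε x‖ ≤ ε⁻¹ * (‖vf' y‖ * ‖wf (ε * x)‖) + ε * (‖vf y‖ * ‖wf' (ε * x)‖) := by
        refine (norm_add_le _ _).trans_eq ?_
        rw [norm_smul_of_nonneg (by positivity), norm_smul_of_nonneg hε.le, norm_mul, norm_mul]
    _ ≤ ε⁻¹ * (1 / (1 + y ^ 2) * (2 * |ε * x|)) + ε * (2 * 1) := by
        gcongr
        · exact norm_vf'_le y
        · exact norm_wf_le _
        · exact norm_vf_le y
        · exact norm_wf'_le _
    _ = ε * (2 * |y| / (1 + y ^ 2)) + 2 * ε := by rw [hεx]; field_simp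
    _ ≤ ε * 1 + 2 * ε := by gcongr; exact div_le_one_of_le₀ hy2 (by positivity)
    _ = 3 * ε := by ring

lemma norm_Ff''_le (hε : 0 < ε) (x : ℝ) :
    ‖Ff'' ε x‖ ≤ (4 * |x / ε| + 2) / (1 + (x / ε) ^ 2) + 4 * ε ^ 2 := by
  set y := x / ε with hy
  have hεx : |ε * x| = ε ^ 2 * |y| := by
    rw [hy, abs_mul, abs_div, abs_of_pos hε]; field_simp
  calc ‖Ff'' ε x‖
      ≤ ε⁻¹ * (ε⁻¹ * (‖vf'' y‖ * ‖wf (ε * x)‖) + ε * (‖vf' y‖ * ‖wf' (ε * x)‖)) +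
          ε * (ε⁻¹ * (‖vf' y‖ * ‖wf' (ε * x)‖) + ε * (‖vf y‖ * ‖wf'' (ε * x)‖)) := by
        refine (norm_add_le _ _).trans ?_
        rw [norm_smul_of_nonneg (by positivity), norm_smul_of_nonneg hε.le]
        gcongr <;> refine (norm_add_le _ _).trans_eq ?_ <;>
          rw [norm_smul_of_nonneg (by positivity), norm_smul_of_nonneg hε.le, norm_mul, norm_mul]
    _ ≤ ε⁻¹ * (ε⁻¹ * (2 / (1 + y ^ 2) * (2 * |ε * x|)) + ε * (1 / (1 + y ^ 2) * 1)) +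
          ε * (ε⁻¹ * (1 / (1 + y ^ 2) * 1) + ε * (2 * 2)) := by
        gcongr
        · exact norm_vf''_le y
        · exact norm_wf_le _
        · exact norm_vf'_le y
        · exact norm_wf'_le _
        · exact norm_vf'_le y
        · exact norm_wf'_le _
        · exact norm_vf_le y
        · exact norm_wf''_le _
    _ = (4 * |y| + 2) / (1 + y ^ 2) + 4 * ε ^ 2 := by rw [hεx]; field_simp; ring

lemma four_mul_abs_add_two_div_le {y : ℝ} (hy : y ≠ 0) :
    (4 * |y| + 2) / (1 + y ^ 2) ≤ 6 * |y| ^ (-(1 / 2) : ℝ) := by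
  rw [Real.rpow_neg (abs_nonneg y), ← Real.sqrt_eq_rpow]
  have hy2 : y ^ 2 = |y| ^ 2 := (sq_abs y).symm
  have hs : 0 < √|y| := Real.sqrt_pos.2 (abs_pos.2 hy)
  set s := √|y|
  have hs2 : |y| = s ^ 2 := (Real.sq_sqrt (abs_nonneg y)).symm
  rw [hy2, hs2, div_le_iff₀ (by positivity)]
  field_simp
  nlinarith [sq_nonneg (s - 1), sq_nonneg (s + 1), sq_nonneg (s ^ 2 - 1), hs]

lemma norm_deriv_deriv_Ff_le (hε : 0 < ε) (hx : x ≠ 0) :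
    ‖deriv (deriv (Ff ε)) x‖ ≤ 6 * √ε * |x| ^ (-(1 / 2) : ℝ) + 4 * ε ^ 2 := by
  rw [deriv_deriv_Ff hε.ne' hx]
  refine (norm_Ff''_le hε x).trans (add_le_add_left ?_ _)
  refine (four_mul_abs_add_two_div_le (div_ne_zero hx hε.ne')).trans_eq ?_
  rw [abs_div, abs_of_pos hε, Real.div_rpow (abs_nonneg x) hε.le, Real.rpow_neg hε.le,
    ← Real.sqrt_eq_rpow, div_inv_eq_mul]
  ring

end Rescaled

open MeasureTheory

lemma intervalIntegrable_abs_rpow {r : ℝ} (hr : -1 < r) (a b : ℝ) :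
    IntervalIntegrable (fun x : ℝ => |x| ^ r) volume a b := by
  refine intervalIntegrable_of_even (fun x => by rw [abs_neg]) fun x hx => ?_
  refine (intervalIntegrable_congr fun t ht => ?_).1 (intervalIntegral.intervalIntegrable_rpow' hr)
  rw [Set.uIoc_of_le hx.le] at ht
  simp [abs_of_pos ht.1]

lemma integral_norm_deriv_deriv_Ff_le {ε a b : ℝ} (hε : 0 < ε) (hab : a ≤ b) :
    ∫ x in a..b, ‖deriv (deriv (Ff ε)) x‖ ≤
      6 * √ε * (∫ x in a..b, |x| ^ (-(1 / 2) : ℝ)) + 4 * ε ^ 2 * (b - a) := by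
  have hint := intervalIntegrable_abs_rpow (r := -(1 / 2)) (by norm_num) a b
  have hbound : ∀ᵐ x, x ∈ Set.Ioc a b →
      ‖‖deriv (deriv (Ff ε)) x‖‖ ≤ 6 * √ε * |x| ^ (-(1 / 2) : ℝ) + 4 * ε ^ 2 := by
    filter_upwards [Measure.ae_ne volume 0] with x hx _
    rw [norm_norm]
    exact norm_deriv_deriv_Ff_le hε hx
  calc ∫ x in a..b, ‖deriv (deriv (Ff ε)) x‖
      ≤ ‖∫ x in a..b, ‖deriv (deriv (Ff ε)) x‖‖ := Real.le_norm_self _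
    _ ≤ ∫ x in a..b, (6 * √ε * |x| ^ (-(1 / 2) : ℝ) + 4 * ε ^ 2) :=
      intervalIntegral.norm_integral_le_of_norm_le hab hbound
        ((hint.const_mul _).add intervalIntegrable_const)
    _ = 6 * √ε * (∫ x in a..b, |x| ^ (-(1 / 2) : ℝ)) + 4 * ε ^ 2 * (b - a) := by
      rw [intervalIntegral.integral_add (hint.const_mul _) intervalIntegrable_const,
        intervalIntegral.integral_const_mul, intervalIntegral.integral_const, smul_eq_mul,
        mul_comm (b - a)]

/-- On `I₀ = [−1−√2, 1+√2]`, as `ε → 0` (with `0 < ε ≤ 1`):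
`sup_{x ∈ I₀, x ≠ 0} |F_ε′(x)| → 0` and `∫_{I₀} |F_ε″(x)| dx → 0`. -/
theorem stmt16 :
    (∀ δ : ℝ, 0 < δ → ∃ ε₀ : ℝ, 0 < ε₀ ∧ ∀ ε : ℝ, 0 < ε → ε ≤ 1 → ε < ε₀ →
      ∀ x ∈ Set.Icc (-1 - Real.sqrt 2) (1 + Real.sqrt 2), x ≠ 0 →
        ‖deriv (Ff ε) x‖ < δ) ∧
    (∀ δ : ℝ, 0 < δ → ∃ ε₀ : ℝ, 0 < ε₀ ∧ ∀ ε : ℝ, 0 < ε → ε ≤ 1 → ε < ε₀ →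
      (∫ x in (-1 - Real.sqrt 2)..(1 + Real.sqrt 2), ‖deriv (deriv (Ff ε)) x‖) < δ) := by
  refine ⟨fun δ hδ => ⟨δ / 3, by positivity, fun ε hε _ hεδ x _ hx => ?_⟩, fun δ hδ => ?_⟩
  · rw [(hasDerivAt_Ff hε.ne' hx).deriv]
    linarith [norm_Ff'_le hε x]
  set a := -1 - Real.sqrt 2
  set b := 1 + Real.sqrt 2
  set C := ∫ x in a..b, |x| ^ (-(1 / 2) : ℝ)
  have hbound : Tendsto (fun ε => 6 * √ε * C + 4 * ε ^ 2 * (b - a)) (nhds 0) (nhds 0) := by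
    simpa using ((by fun_prop : Continuous fun ε => 6 * √ε * C + 4 * ε ^ 2 * (b - a)).tendsto 0)
  obtain ⟨ε₀, hε₀, hlt⟩ := Metric.eventually_nhds_iff.1 (hbound.eventually (gt_mem_nhds hδ))
  refine ⟨ε₀, hε₀, fun ε hε _ hεε₀ => ?_⟩
  refine (integral_norm_deriv_deriv_Ff_le hε (by linarith [Real.sqrt_nonneg 2])).trans_lt (hlt ?_)
  rwa [Real.dist_eq, sub_zero, abs_of_pos hε]

end
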